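/- For every integer n ≥ 1, M_n is not a finitely generated M_0-module. Moreover the set M_∞ = ⋃_{n ≥ 0} M_n, which is the set of values of ν̄ on the nonzero elements of the ring K[x, y/x] (equivalently, of its localization B = K[x, y/x]_{(x, y/x)}), is not a finitely generated M_0-module. -/

import Mathlib

open MvPolynomial

/-- `β̄_0 = 1`, `β̄_{i+1} = 2β̄_i + 1/2^{i+1}`, so `β̄_i = (2^{i+2} - 2^{-i})/3`. -/
noncomputable def betaSeq : ℕ → ℚ
  | 0 => 1
  | (i + 1) => 2 * betaSeq i + 1 / 2 ^ (i + 1)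

/-- The generating sequence `P_0 = x`, `P_1 = y`, `P_{i+1} = P_i² - x^{2^{i+1}}·P_{i-1}`. -/
noncomputable def Ppoly (K : Type) [Field K] : ℕ → MvPolynomial (Fin 2) K
  | 0 => X 0
  | 1 => X 1
  | (i + 2) => (Ppoly K (i + 1)) ^ 2 - (X 0) ^ (2 ^ (i + 2)) * Ppoly K i

/-- The rational function field `K(x,y)`. -/
abbrev Kxy (K : Type) [Field K] := FractionRing (MvPolynomial (Fin 2) K)

/-- `W_n = {a_0 + a_1·(y/x) + ⋯ + a_n·(y/x)^n ∣ a_0, …, a_n ∈ K[x,y]} ⊆ K(x,y)`. -/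
noncomputable def Wset (K : Type) [Field K] (n : ℕ) : Set (Kxy K) :=
  {g | ∃ a : Fin (n + 1) → MvPolynomial (Fin 2) K,
    g = ∑ j : Fin (n + 1), algebraMap (MvPolynomial (Fin 2) K) (Kxy K) (a j) *
      (algebraMap (MvPolynomial (Fin 2) K) (Kxy K) (X 1) /
        algebraMap (MvPolynomial (Fin 2) K) (Kxy K) (X 0)) ^ (j : ℕ)}

/-- `M_n = {ν̄(f) ∣ f ∈ W_n, f ≠ 0}` for a valuation `v` on `K(x,y)`. -/
def Mset (K : Type) [Field K] (v : Kxy K → ℚ) (n : ℕ) : Set ℚ :=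
  {q | ∃ g ∈ Wset K n, g ≠ 0 ∧ v g = q}

/-- A subset `M ⊆ ℚ` is a finitely generated `M₀`-module if it is a finite union
`M = ⋃ (M₀ + m_i)` with `m_1, …, m_k ∈ M`. -/
def IsFinitelyGeneratedSemigroupModule (M₀ M : Set ℚ) : Prop :=
  ∃ T : Finset ℚ, (T : Set ℚ) ⊆ M ∧ M = ⋃ m ∈ T, {q : ℚ | ∃ μ ∈ M₀, q = μ + m}

/-!
Let `Dₖ = 2⁻ᵏℤ`. Then `β̄ᵢ ∈ Dᵢ`, and `β̄ₖ₊₁ - 1 ∈ Dₖ₊₁ \ Dₖ` because of the summand `1/2ᵏ⁺¹`.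
Since `Pᵢ ∈ (x, y)`, say `Pᵢ = a x + b y`, the element `Pᵢ/x = a + b·(y/x)` lies in `W₁ ⊆ Wₙ`
and has value `β̄ᵢ - 1`; on the other hand all values on `Wₙ` are `≥ 0`, as `ν̄(y/x) = 3/2`.
If `Mₙ` were generated by a finite set `T`, pick `k` with no `m ∈ T` in `Dₖ₊₁ \ Dₖ` (each `m`
lies in at most one of these differences). Writing `β̄ₖ₊₁ - 1 = μ + m` with `μ ∈ M₀`, `m ≥ 0`
forces `μ < β̄ₖ₊₁`, so `μ` only involves `β̄₀, …, β̄ₖ` and lies in `Dₖ`; hence `m ∈ Dₖ₊₁ \ Dₖ`,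
contradicting the choice of `k`. The same argument applies to `M_∞ ⊇ M₁`.
-/

open AddSubgroup

abbrev dyadic (k : ℕ) : AddSubgroup ℚ := zmultiples ((2 : ℚ) ^ k)⁻¹

lemma dyadic_mono : Monotone dyadic := by
  refine monotone_nat_of_le_succ fun k => zmultiples_le.mpr ⟨2, ?_⟩
  simp only [pow_succ, mul_inv, zsmul_eq_mul]
  ring_nf

lemma one_mem_dyadic (k : ℕ) : (1 : ℚ) ∈ dyadic k :=
  ⟨2 ^ k, by simp⟩

lemma inv_two_pow_succ_notMem_dyadic (k : ℕ) : ((2 : ℚ) ^ (k + 1))⁻¹ ∉ dyadic k := by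
  rintro ⟨z, hz⟩
  have h : (z : ℚ) * 2 = 1 := by
    simp only [zsmul_eq_mul, pow_succ, mul_inv] at hz
    field_simp at hz
    linarith
  have : z * 2 = 1 := by exact_mod_cast h
  omega

lemma betaSeq_pos (i : ℕ) : 0 < betaSeq i := by
  induction i with
  | zero => norm_num [betaSeq]
  | succ i ih => rw [betaSeq]; positivity

lemma betaSeq_strictMono : StrictMono betaSeq :=
  strictMono_nat_of_lt_succ fun i => by
    rw [betaSeq]
    linarith [betaSeq_pos i, show (0 : ℚ) < 1 / 2 ^ (i + 1) by positivity]

lemma betaSeq_mem_dyadic (i : ℕ) : betaSeq i ∈ dyadic i := by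
  induction i with
  | zero => simpa [betaSeq] using one_mem_dyadic 0
  | succ i ih =>
    rw [betaSeq, one_div]
    refine add_mem ?_ (mem_zmultiples _)
    simpa [two_mul] using add_mem (dyadic_mono i.le_succ ih) (dyadic_mono i.le_succ ih)

lemma betaSeq_succ_sub_one_notMem_dyadic (k : ℕ) : betaSeq (k + 1) - 1 ∉ dyadic k := by
  intro h
  apply inv_two_pow_succ_notMem_dyadic k
  have h2 : 2 * betaSeq k ∈ dyadic k := by
    simpa [two_mul] using add_mem (betaSeq_mem_dyadic k) (betaSeq_mem_dyadic k)
  rw [betaSeq] at h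
  convert sub_mem (add_mem h (one_mem_dyadic k)) h2 using 1
  ring

noncomputable def betaComb (l : ℕ →₀ ℕ) : ℚ := l.sum fun i k => (k : ℚ) * betaSeq i

lemma betaSeq_le_betaComb {l : ℕ →₀ ℕ} {j : ℕ} (hj : j ∈ l.support) :
    betaSeq j ≤ betaComb l := by
  have hlj : (1 : ℚ) ≤ l j := by exact_mod_cast Nat.one_le_iff_ne_zero.mpr (by simpa using hj)
  calc betaSeq j ≤ l j * betaSeq j := le_mul_of_one_le_left (betaSeq_pos j).le hlj
    _ ≤ betaComb l := Finset.single_le_sum (f := fun i => (l i : ℚ) * betaSeq i)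
        (fun i _ => mul_nonneg (Nat.cast_nonneg _) (betaSeq_pos i).le) hj

lemma betaComb_mem_dyadic {l : ℕ →₀ ℕ} {k : ℕ} (hl : ∀ j ∈ l.support, j ≤ k) :
    betaComb l ∈ dyadic k :=
  sum_mem fun j hj => by
    simpa [nsmul_eq_mul] using nsmul_mem (dyadic_mono (hl j hj) (betaSeq_mem_dyadic j)) (l j)

lemma betaComb_mem_dyadic_of_lt {l : ℕ →₀ ℕ} {k : ℕ} (hl : betaComb l < betaSeq (k + 1)) :
    betaComb l ∈ dyadic k :=
  betaComb_mem_dyadic fun _ hj => Nat.lt_succ_iff.mp <|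
    betaSeq_strictMono.lt_iff_lt.mp ((betaSeq_le_betaComb hj).trans_lt hl)

lemma setOf_mem_dyadic_succ_diff_subsingleton (m : ℚ) :
    {k | m ∈ dyadic (k + 1) ∧ m ∉ dyadic k}.Subsingleton := by
  intro i ⟨hi, hi'⟩ j ⟨hj, hj'⟩
  by_contra hne
  rcases Nat.lt_or_gt_of_ne hne with h | h
  · exact hj' (dyadic_mono h hi)
  · exact hi' (dyadic_mono h hj)

theorem not_isFinitelyGenerated_of_nonneg {M : Set ℚ} (hM : ∀ q ∈ M, 0 ≤ q)
    (hβ : ∀ i, betaSeq i - 1 ∈ M) :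
    ¬ IsFinitelyGeneratedSemigroupModule {q | ∃ l, q = betaComb l} M := by
  rintro ⟨T, hTM, hT⟩
  obtain ⟨k, hk⟩ := ((T.finite_toSet.biUnion fun m _ =>
    (setOf_mem_dyadic_succ_diff_subsingleton m).finite)).exists_notMem
  have hmem := hβ (k + 1)
  rw [hT] at hmem
  simp only [Set.mem_iUnion, Set.mem_ofPred_eq] at hmem
  obtain ⟨m, hmT, _, ⟨l, rfl⟩, hsum⟩ := hmem
  have hl : betaComb l ∈ dyadic k :=
    betaComb_mem_dyadic_of_lt (by linarith [hM m (hTM hmT)])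
  refine hk (Set.mem_biUnion hmT ⟨?_, fun hm => ?_⟩)
  · rw [eq_sub_of_add_eq' hsum.symm]
    exact sub_mem (sub_mem (betaSeq_mem_dyadic _) (one_mem_dyadic _)) (dyadic_mono k.le_succ hl)
  · exact betaSeq_succ_sub_one_notMem_dyadic k (hsum ▸ add_mem hl hm)

lemma Ppoly_mem_span (K : Type) [Field K] (i : ℕ) :
    Ppoly K i ∈ Ideal.span ({X 0, X 1} : Set (MvPolynomial (Fin 2) K)) := by
  induction i using Nat.strong_induction_on with
  | _ i ih =>
    match i, ih with
    | 0, _ => exact Ideal.subset_span (by simp [Ppoly])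
    | 1, _ => exact Ideal.subset_span (by simp [Ppoly])
    | i + 2, ih =>
      rw [Ppoly, sq]
      exact sub_mem (Ideal.mul_mem_left _ _ (ih _ (by omega)))
        (Ideal.mul_mem_left _ _ (ih _ (by omega)))

lemma aeval_Ppoly_succ (K : Type) [Field K] (i : ℕ) :
    aeval (![0, Polynomial.X] : Fin 2 → Polynomial K) (Ppoly K (i + 1)) = Polynomial.X ^ 2 ^ i := by
  induction i with
  | zero => simp [Ppoly]
  | succ i ih =>
    rw [Ppoly, map_sub, map_mul, map_pow, map_pow, ih, aeval_X]
    simp [← pow_mul, ← pow_succ]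

lemma Ppoly_ne_zero (K : Type) [Field K] : ∀ i, Ppoly K i ≠ 0
  | 0 => X_ne_zero 0
  | i + 1 => fun h => pow_ne_zero (2 ^ i) (Polynomial.X_ne_zero (R := K)) <| by
    simpa [h] using (aeval_Ppoly_succ K i).symm

variable {K : Type} [Field K]

local notation "φ" => algebraMap (MvPolynomial (Fin 2) K) (Kxy K)

lemma algebraMap_ne_zero {f : MvPolynomial (Fin 2) K} (hf : f ≠ 0) : φ f ≠ 0 :=
  (map_ne_zero_iff _ (IsFractionRing.injective _ _)).mpr hf

lemma X_zero_ne_zero : φ (X 0) ≠ 0 := algebraMap_ne_zero (X_ne_zero 0)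

noncomputable def yDivX (K : Type) [Field K] : Kxy K :=
  algebraMap (MvPolynomial (Fin 2) K) (Kxy K) (X 1) /
    algebraMap (MvPolynomial (Fin 2) K) (Kxy K) (X 0)

lemma yDivX_ne_zero : yDivX K ≠ 0 := div_ne_zero (algebraMap_ne_zero (X_ne_zero 1)) X_zero_ne_zero

lemma mem_Wset_iff {n : ℕ} {g : Kxy K} :
    g ∈ Wset K n ↔ ∃ p : Polynomial (MvPolynomial (Fin 2) K), p.natDegree ≤ n ∧
      p.eval₂ φ (yDivX K) = g := by
  constructor
  · rintro ⟨a, rfl⟩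
    refine ⟨∑ j : Fin (n + 1), Polynomial.C (a j) * Polynomial.X ^ (j : ℕ), ?_, ?_⟩
    · refine Polynomial.natDegree_sum_le_of_forall_le _ _ fun j _ => ?_
      exact (Polynomial.natDegree_C_mul_X_pow_le _ _).trans (Nat.lt_succ_iff.mp j.isLt)
    · simp [Polynomial.eval₂_finsetSum, yDivX]
  · rintro ⟨p, hp, rfl⟩
    refine ⟨fun j => p.coeff j, ?_⟩
    rw [Polynomial.eval₂_eq_sum_range' _ (Nat.lt_succ_of_le hp), ← Fin.sum_univ_eq_sum_range]
    rfl

lemma Wset_mono : Monotone (Wset K) := fun _ _ hmn _ hg =>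
  let ⟨p, hp, hpg⟩ := mem_Wset_iff.mp hg
  mem_Wset_iff.mpr ⟨p, hp.trans hmn, hpg⟩

lemma Ppoly_div_X_zero_mem_Wset (i : ℕ) : φ (Ppoly K i) / φ (X 0) ∈ Wset K 1 := by
  obtain ⟨a, b, hab⟩ := Ideal.mem_span_pair.mp (Ppoly_mem_span K i)
  refine ⟨![a, b], ?_⟩
  rw [Fin.sum_univ_two, ← hab, div_eq_iff X_zero_ne_zero]
  simp only [Fin.isValue, map_add, map_mul, Matrix.cons_val_zero, Matrix.cons_val_one,
    Matrix.cons_val_fin_one, Fin.val_zero, Fin.val_one, pow_zero, pow_one, mul_one]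
  field_simp

lemma val_sum_nonneg {R : Type*} [AddCommMonoid R] {v : R → ℚ}
    (hadd : ∀ g h : R, g ≠ 0 → h ≠ 0 → g + h ≠ 0 → min (v g) (v h) ≤ v (g + h))
    {ι : Type*} (s : Finset ι) (c : ι → R) (hc : ∀ j ∈ s, c j ≠ 0 → 0 ≤ v (c j)) :
    ∑ j ∈ s, c j ≠ 0 → 0 ≤ v (∑ j ∈ s, c j) := by
  refine Finset.sum_induction c (fun g => g ≠ 0 → 0 ≤ v g) (fun g h hg hh hgh => ?_)
    (fun h => absurd rfl h) hc
  by_cases hg0 : g = 0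
  · simp_all
  by_cases hh0 : h = 0
  · simp_all
  exact (le_min (hg hg0) (hh hh0)).trans (hadd g h hg0 hh0 hgh)

section MulHom

variable {G : Type*} [GroupWithZero G] {v : G → ℚ}
  (hmul : ∀ g h : G, g ≠ 0 → h ≠ 0 → v (g * h) = v g + v h)
include hmul

lemma val_one : v 1 = 0 := by
  have := hmul 1 1 one_ne_zero one_ne_zero
  rw [mul_one] at this
  linarith

lemma val_div {g h : G} (hg : g ≠ 0) (hh : h ≠ 0) : v (g / h) = v g - v h := by
  have := hmul (g / h) h (div_ne_zero hg hh) hh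
  rw [div_mul_cancel₀ g hh] at this
  linarith

lemma val_pow {g : G} (hg : g ≠ 0) (k : ℕ) : v (g ^ k) = k * v g := by
  induction k with
  | zero => simpa using val_one hmul
  | succ k ih =>
    rw [pow_succ, hmul _ _ (pow_ne_zero _ hg) hg, ih]
    push_cast
    ring

end MulHom

section Valuation

variable {v : Kxy K → ℚ} (hmul : ∀ g h : Kxy K, g ≠ 0 → h ≠ 0 → v (g * h) = v g + v h)
  (hβ : ∀ i : ℕ, v (algebraMap (MvPolynomial (Fin 2) K) (Kxy K) (Ppoly K i)) = betaSeq i)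
include hmul hβ

lemma val_Ppoly_div_X_zero (i : ℕ) : v (φ (Ppoly K i) / φ (X 0)) = betaSeq i - 1 := by
  rw [val_div hmul (algebraMap_ne_zero (Ppoly_ne_zero K i)) X_zero_ne_zero, hβ]
  simpa [betaSeq, Ppoly] using hβ 0

lemma val_yDivX : v (yDivX K) = 3 / 2 := by
  rw [yDivX, ← show Ppoly K 1 = X 1 from rfl, val_Ppoly_div_X_zero hmul hβ]
  norm_num [betaSeq]

lemma betaSeq_sub_one_mem_Mset {n : ℕ} (hn : 1 ≤ n) (i : ℕ) : betaSeq i - 1 ∈ Mset K v n :=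
  ⟨_, Wset_mono hn (Ppoly_div_X_zero_mem_Wset i),
    div_ne_zero (algebraMap_ne_zero (Ppoly_ne_zero K i)) X_zero_ne_zero,
    val_Ppoly_div_X_zero hmul hβ i⟩

lemma nonneg_of_mem_Mset
    (hadd : ∀ g h : Kxy K, g ≠ 0 → h ≠ 0 → g + h ≠ 0 → min (v g) (v h) ≤ v (g + h))
    (hnonneg : ∀ f : MvPolynomial (Fin 2) K, f ≠ 0 → 0 ≤ v (φ f))
    {n : ℕ} {q : ℚ} (hq : q ∈ Mset K v n) : 0 ≤ q := by
  obtain ⟨_, ⟨a, rfl⟩, hg0, rfl⟩ := hq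
  refine val_sum_nonneg hadd _ _ (fun j _ hj => ?_) hg0
  have haj : a j ≠ 0 := fun h => hj (by simp [h])
  change 0 ≤ v (φ (a j) * yDivX K ^ (j : ℕ))
  rw [hmul _ _ (algebraMap_ne_zero haj) (pow_ne_zero _ yDivX_ne_zero),
    val_pow hmul yDivX_ne_zero, val_yDivX hmul hβ]
  have := hnonneg _ haj
  positivity

end Valuation

lemma algebraMap_mem_adjoin (f : MvPolynomial (Fin 2) K) :
    φ f ∈ Algebra.adjoin K {φ (X 0), yDivX K} := by
  have hX : ∀ i, φ (X i) ∈ Algebra.adjoin K {φ (X 0), yDivX K} := by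
    refine Fin.forall_fin_two.mpr ⟨Algebra.subset_adjoin (by simp), ?_⟩
    rw [show φ (X 1) = φ (X 0) * yDivX K from (mul_div_cancel₀ _ X_zero_ne_zero).symm]
    exact mul_mem (Algebra.subset_adjoin (by simp)) (Algebra.subset_adjoin (by simp))
  induction f using MvPolynomial.induction_on with
  | C r => exact Subalgebra.algebraMap_mem _ r
  | add p q hp hq => rw [map_add]; exact add_mem hp hq
  | mul_X p i hp => rw [map_mul]; exact mul_mem hp (hX i)

lemma adjoin_eq_range_eval₂ :
    (Algebra.adjoin K {φ (X 0), yDivX K} : Set (Kxy K)) =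
      Set.range fun p : Polynomial (MvPolynomial (Fin 2) K) => p.eval₂ φ (yDivX K) := by
  ext g
  constructor
  · intro hg
    induction hg using Algebra.adjoin_induction with
    | mem g hg =>
      rcases hg with rfl | rfl
      · exact ⟨Polynomial.C (X 0), Polynomial.eval₂_C _ _⟩
      · exact ⟨Polynomial.X, Polynomial.eval₂_X _ _⟩
    | algebraMap r => exact ⟨Polynomial.C (C r), Polynomial.eval₂_C _ _⟩
    | add g h _ _ ihg ihh =>
      obtain ⟨⟨p, rfl⟩, ⟨q, rfl⟩⟩ := And.intro ihg ihh
      exact ⟨p + q, Polynomial.eval₂_add _ _⟩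
    | mul g h _ _ ihg ihh =>
      obtain ⟨⟨p, rfl⟩, ⟨q, rfl⟩⟩ := And.intro ihg ihh
      exact ⟨p * q, Polynomial.eval₂_mul _ _⟩
  · rintro ⟨p, rfl⟩
    beta_reduce
    rw [SetLike.mem_coe, Polynomial.eval₂_eq_sum_range]
    exact Subalgebra.sum_mem _ fun n _ =>
      mul_mem (algebraMap_mem_adjoin _) (pow_mem (Algebra.subset_adjoin (by simp)) n)

lemma iUnion_Wset : ⋃ n, Wset K n = Algebra.adjoin K {φ (X 0), yDivX K} := by
  rw [adjoin_eq_range_eval₂]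
  ext g
  simp only [Set.mem_iUnion, mem_Wset_iff, Set.mem_range]
  exact ⟨fun ⟨_, p, _, hp⟩ => ⟨p, hp⟩, fun ⟨p, hp⟩ => ⟨p.natDegree, p, le_rfl, hp⟩⟩

lemma iUnion_Mset (v : Kxy K → ℚ) :
    ⋃ n, Mset K v n = {q | ∃ g ∈ Algebra.adjoin K {φ (X 0), yDivX K}, g ≠ 0 ∧ v g = q} := by
  ext q
  simp only [Mset, Set.mem_iUnion, Set.mem_ofPred_eq, ← SetLike.mem_coe, ← iUnion_Wset]
  exact ⟨fun ⟨n, g, hg, h⟩ => ⟨g, ⟨n, hg⟩, h⟩, fun ⟨g, ⟨n, hg⟩, h⟩ => ⟨n, g, hg, h⟩⟩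

theorem Mn_not_finitely_generated_general
    (K : Type) [Field K]
    (v : Kxy K → ℚ)
    (hmul : ∀ g h : Kxy K, g ≠ 0 → h ≠ 0 → v (g * h) = v g + v h)
    (hadd : ∀ g h : Kxy K, g ≠ 0 → h ≠ 0 → g + h ≠ 0 → min (v g) (v h) ≤ v (g + h))
    (hnonneg : ∀ f : MvPolynomial (Fin 2) K, f ≠ 0 →
      0 ≤ v (algebraMap (MvPolynomial (Fin 2) K) (Kxy K) f))
    (hβ : ∀ i : ℕ, v (algebraMap (MvPolynomial (Fin 2) K) (Kxy K) (Ppoly K i)) = betaSeq i)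
    (hM0 : Mset K v 0 = {q : ℚ | ∃ l : ℕ →₀ ℕ, q = l.sum fun i k => (k : ℚ) * betaSeq i}) :
    (∀ n : ℕ, 1 ≤ n → ¬ IsFinitelyGeneratedSemigroupModule (Mset K v 0) (Mset K v n)) ∧
    (⋃ n : ℕ, Mset K v n) =
      {q : ℚ | ∃ g ∈ Algebra.adjoin K
        ({algebraMap (MvPolynomial (Fin 2) K) (Kxy K) (X 0),
          algebraMap (MvPolynomial (Fin 2) K) (Kxy K) (X 1) /
            algebraMap (MvPolynomial (Fin 2) K) (Kxy K) (X 0)} : Set (Kxy K)),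
        g ≠ 0 ∧ v g = q} ∧
    ¬ IsFinitelyGeneratedSemigroupModule (Mset K v 0) (⋃ n : ℕ, Mset K v n) := by
  have hMn_nonneg : ∀ n, ∀ q ∈ Mset K v n, 0 ≤ q := fun _ _ =>
    nonneg_of_mem_Mset hmul hβ hadd hnonneg
  rw [hM0]
  refine ⟨fun n hn => not_isFinitelyGenerated_of_nonneg (hMn_nonneg n)
      (betaSeq_sub_one_mem_Mset hmul hβ hn), iUnion_Mset v,
    not_isFinitelyGenerated_of_nonneg ?_ fun i =>
      Set.mem_iUnion.mpr ⟨1, betaSeq_sub_one_mem_Mset hmul hβ le_rfl i⟩⟩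
  intro q hq
  obtain ⟨n, hn⟩ := Set.mem_iUnion.mp hq
  exact hMn_nonneg n q hn

/-- For every `n ≥ 1`, `M_n` is not a finitely generated `M_0`-module; moreover
`M_∞ = ⋃_n M_n`, which is the set of values of `ν̄` on the nonzero elements of the ring
`K[x, y/x]`, is not a finitely generated `M_0`-module. -/
theorem Mn_not_finitely_generated
    (K : Type) [Field K] [IsAlgClosed K]
    (v : Kxy K → ℚ)
    (hmul : ∀ g h : Kxy K, g ≠ 0 → h ≠ 0 → v (g * h) = v g + v h)
    (hadd : ∀ g h : Kxy K, g ≠ 0 → h ≠ 0 → g + h ≠ 0 → min (v g) (v h) ≤ v (g + h))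
    (hnonneg : ∀ f : MvPolynomial (Fin 2) K, f ≠ 0 →
      0 ≤ v (algebraMap (MvPolynomial (Fin 2) K) (Kxy K) f))
    (hpos : ∀ f : MvPolynomial (Fin 2) K, f ≠ 0 → f ∈ Ideal.span {X 0, X 1} →
      0 < v (algebraMap (MvPolynomial (Fin 2) K) (Kxy K) f))
    (hβ : ∀ i : ℕ, v (algebraMap (MvPolynomial (Fin 2) K) (Kxy K) (Ppoly K i)) = betaSeq i)
    (hM0 : Mset K v 0 = {q : ℚ | ∃ l : ℕ →₀ ℕ, q = l.sum fun i k => (k : ℚ) * betaSeq i}) :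
    (∀ n : ℕ, 1 ≤ n → ¬ IsFinitelyGeneratedSemigroupModule (Mset K v 0) (Mset K v n)) ∧
    (⋃ n : ℕ, Mset K v n) =
      {q : ℚ | ∃ g ∈ Algebra.adjoin K
        ({algebraMap (MvPolynomial (Fin 2) K) (Kxy K) (X 0),
          algebraMap (MvPolynomial (Fin 2) K) (Kxy K) (X 1) /
            algebraMap (MvPolynomial (Fin 2) K) (Kxy K) (X 0)} : Set (Kxy K)),
        g ≠ 0 ∧ v g = q} ∧
    ¬ IsFinitelyGeneratedSemigroupModule (Mset K v 0) (⋃ n : ℕ, Mset K v n) :=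
  Mn_not_finitely_generated_general K v hmul hadd hnonneg hβ hM0
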